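/- arXiv:math/0109109 — 2 statements merged into one kernel-verified Lean document; each statement's English description precedes it below -/
import Mathlib

section
/- Let Ω ⊆ ℝ² be open, ψ : ℝ² → ℝ three times continuously differentiable, and φ : ℝ² → ℝ smooth with compact support contained in Ω. Then ∫_Ω (−ψ_y Δψ_x + ψ_x Δψ_y) φ dxdy = ∫_Ω Δψ (ψ_y φ_x − ψ_x φ_y) dxdy, where subscripts denote partial derivatives and Δ is the Laplacian. -/
open MeasureTheory

/-- Partial derivative in the `x` direction. -/
noncomputable def pdx (f : ℝ × ℝ → ℝ) (p : ℝ × ℝ) : ℝ := fderiv ℝ f p (1, 0)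

/-- Partial derivative in the `y` direction. -/
noncomputable def pdy (f : ℝ × ℝ → ℝ) (p : ℝ × ℝ) : ℝ := fderiv ℝ f p (0, 1)

/-- The Laplacian `Δf = f_xx + f_yy`. -/
noncomputable def lap (f : ℝ × ℝ → ℝ) : ℝ × ℝ → ℝ :=
  fun p => pdx (pdx f) p + pdy (pdy f) p

section aux
variable {f g : ℝ × ℝ → ℝ} {p : ℝ × ℝ}

lemma contDiff_pdx {n : WithTop ℕ∞} (hf : ContDiff ℝ (n+1) f) : ContDiff ℝ n (pdx f) :=
  (hf.fderiv_right le_rfl).clm_apply contDiff_const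

lemma contDiff_pdy {n : WithTop ℕ∞} (hf : ContDiff ℝ (n+1) f) : ContDiff ℝ n (pdy f) :=
  (hf.fderiv_right le_rfl).clm_apply contDiff_const

lemma pdx_mul (hf : DifferentiableAt ℝ f p) (hg : DifferentiableAt ℝ g p) :
    pdx (fun q => f q * g q) p = pdx f p * g p + f p * pdx g p := by
  unfold pdx
  rw [fderiv_fun_mul hf hg]
  simp [smul_eq_mul]
  ring

lemma pdy_mul (hf : DifferentiableAt ℝ f p) (hg : DifferentiableAt ℝ g p) :
    pdy (fun q => f q * g q) p = pdy f p * g p + f p * pdy g p := by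
  unfold pdy
  rw [fderiv_fun_mul hf hg]
  simp [smul_eq_mul]
  ring

lemma pdx_add (hf : DifferentiableAt ℝ f p) (hg : DifferentiableAt ℝ g p) :
    pdx (fun q => f q + g q) p = pdx f p + pdx g p := by
  unfold pdx
  rw [fderiv_fun_add hf hg]
  simp

lemma pdy_add (hf : DifferentiableAt ℝ f p) (hg : DifferentiableAt ℝ g p) :
    pdy (fun q => f q + g q) p = pdy f p + pdy g p := by
  unfold pdy
  rw [fderiv_fun_add hf hg]
  simp

lemma pdx_pdy_comm (hf : ContDiff ℝ 2 f) (p : ℝ × ℝ) : pdx (pdy f) p = pdy (pdx f) p := by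
  have hd1 : ∀ q, HasFDerivAt f (fderiv ℝ f q) q := fun q =>
    ((hf.differentiable (by norm_num)) q).hasFDerivAt
  have hd2 : DifferentiableAt ℝ (fderiv ℝ f) p :=
    ((hf.fderiv_right (m := 1) le_rfl).differentiable one_ne_zero) p
  have sym := second_derivative_symmetric hd1 hd2.hasFDerivAt ((1:ℝ),(0:ℝ)) ((0:ℝ),(1:ℝ))
  have e1 : pdx (pdy f) p = fderiv ℝ (fderiv ℝ f) p (1,0) (0,1) := by
    show fderiv ℝ (fun q => fderiv ℝ f q (0,1)) p (1,0) = _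
    rw [fderiv_clm_apply hd2 (differentiableAt_const _)]
    simp
  have e2 : pdy (pdx f) p = fderiv ℝ (fderiv ℝ f) p (0,1) (1,0) := by
    show fderiv ℝ (fun q => fderiv ℝ f q (1,0)) p (0,1) = _
    rw [fderiv_clm_apply hd2 (differentiableAt_const _)]
    simp
  rw [e1, e2, sym]

lemma integral_deriv_eq_zero' (g : ℝ → ℝ) (hg : ContDiff ℝ 1 g) (h2 : HasCompactSupport g) :
    ∫ x, deriv g x = 0 := by
  have hint : Integrable (deriv g) :=
    (hg.continuous_deriv le_rfl).integrable_of_hasCompactSupport h2.deriv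
  rw [← intervalIntegral.integral_Iic_add_Ioi (b := (0:ℝ)) hint.integrableOn hint.integrableOn,
    HasCompactSupport.integral_Iic_deriv_eq hg h2, HasCompactSupport.integral_Ioi_deriv_eq hg h2]
  ring

lemma hcs_slice_x (F : ℝ × ℝ → ℝ) (hF : HasCompactSupport F) (y : ℝ) :
    HasCompactSupport (fun x => F (x, y)) := by
  have h1 : IsCompact (Prod.fst '' tsupport F) := hF.image continuous_fst
  refine IsCompact.of_isClosed_subset h1 (isClosed_tsupport _) ?_
  refine closure_minimal (fun x hx => ?_) h1.isClosed
  exact ⟨(x, y), subset_tsupport _ hx, rfl⟩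

lemma hcs_slice_y (F : ℝ × ℝ → ℝ) (hF : HasCompactSupport F) (x : ℝ) :
    HasCompactSupport (fun y => F (x, y)) := by
  have h1 : IsCompact (Prod.snd '' tsupport F) := hF.image continuous_snd
  refine IsCompact.of_isClosed_subset h1 (isClosed_tsupport _) ?_
  refine closure_minimal (fun y hy => ?_) h1.isClosed
  exact ⟨(x, y), subset_tsupport _ hy, rfl⟩

lemma hcs_aux (hg : HasCompactSupport g) (h : ∀ p, p ∉ tsupport g → f p = 0) :
    HasCompactSupport f := by
  refine IsCompact.of_isClosed_subset hg (isClosed_tsupport _) (closure_minimal ?_ hg.isClosed)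
  intro p hp
  by_contra hc
  exact hp (h p hc)

lemma hcs_pd (F : ℝ × ℝ → ℝ) (hF : HasCompactSupport F) (v : ℝ × ℝ) :
    HasCompactSupport (fun p => fderiv ℝ F p v) := by
  refine hcs_aux hF fun p hp => ?_
  have : fderiv ℝ F p = 0 := by
    by_contra h
    exact hp (support_fderiv_subset ℝ h)
  rw [this]; rfl

lemma cont_pd (F : ℝ × ℝ → ℝ) (hF : ContDiff ℝ 1 F) (v : ℝ × ℝ) :
    Continuous (fun p => fderiv ℝ F p v) :=
  (hF.continuous_fderiv one_ne_zero).clm_apply continuous_const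

lemma integral_pdx_eq_zero (F : ℝ × ℝ → ℝ) (hF : ContDiff ℝ 1 F) (h2 : HasCompactSupport F) :
    ∫ p, pdx F p = 0 := by
  have hint : Integrable (pdx F) :=
    (cont_pd F hF _).integrable_of_hasCompactSupport (hcs_pd F h2 _)
  rw [show (volume : Measure (ℝ × ℝ)) = (volume : Measure ℝ).prod volume from
      MeasureTheory.Measure.volume_eq_prod ℝ ℝ] at hint ⊢
  rw [MeasureTheory.integral_prod_symm _ hint]
  have key : ∀ y : ℝ, (∫ x, pdx F (x, y)) = 0 := by
    intro y
    have hg : ContDiff ℝ 1 (fun x => F (x, y)) := hF.comp (contDiff_id.prodMk contDiff_const)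
    have h2g : HasCompactSupport (fun x => F (x, y)) := hcs_slice_x F h2 y
    have hd : ∀ x : ℝ, deriv (fun x => F (x, y)) x = pdx F (x, y) := by
      intro x
      have h1 : HasDerivAt (fun x : ℝ => ((x, y) : ℝ × ℝ)) (1, 0) x :=
        HasDerivAt.prodMk (hasDerivAt_id x) (hasDerivAt_const x y)
      have h2' : HasDerivAt (fun x => F (x, y)) (fderiv ℝ F (x, y) (1, 0)) x :=
        ((hF.differentiable one_ne_zero (x, y)).hasFDerivAt).comp_hasDerivAt x h1
      exact h2'.deriv
    calc (∫ x, pdx F (x, y)) = ∫ x, deriv (fun x => F (x, y)) x := by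
          simp only [hd]
      _ = 0 := integral_deriv_eq_zero' _ hg h2g
  simp only [key, integral_zero]

lemma integral_pdy_eq_zero (F : ℝ × ℝ → ℝ) (hF : ContDiff ℝ 1 F) (h2 : HasCompactSupport F) :
    ∫ p, pdy F p = 0 := by
  have hint : Integrable (pdy F) :=
    (cont_pd F hF _).integrable_of_hasCompactSupport (hcs_pd F h2 _)
  rw [show (volume : Measure (ℝ × ℝ)) = (volume : Measure ℝ).prod volume from
      MeasureTheory.Measure.volume_eq_prod ℝ ℝ] at hint ⊢
  rw [MeasureTheory.integral_prod _ hint]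
  have key : ∀ x : ℝ, (∫ y, pdy F (x, y)) = 0 := by
    intro x
    have hg : ContDiff ℝ 1 (fun y => F (x, y)) := hF.comp (contDiff_const.prodMk contDiff_id)
    have h2g : HasCompactSupport (fun y => F (x, y)) := hcs_slice_y F h2 x
    have hd : ∀ y : ℝ, deriv (fun y => F (x, y)) y = pdy F (x, y) := by
      intro y
      have h1 : HasDerivAt (fun y : ℝ => ((x, y) : ℝ × ℝ)) (0, 1) y :=
        HasDerivAt.prodMk (hasDerivAt_const y x) (hasDerivAt_id y)
      have h2' : HasDerivAt (fun y => F (x, y)) (fderiv ℝ F (x, y) (0, 1)) y :=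
        ((hF.differentiable one_ne_zero (x, y)).hasFDerivAt).comp_hasDerivAt y h1
      exact h2'.deriv
    calc (∫ y, pdy F (x, y)) = ∫ y, deriv (fun y => F (x, y)) y := by
          simp only [hd]
      _ = 0 := integral_deriv_eq_zero' _ hg h2g
  simp only [key, integral_zero]

end aux

/-- Integration by parts for the nonlinear term of the stream function equation:
`∫_Ω (−ψ_y Δψ_x + ψ_x Δψ_y) φ = ∫_Ω Δψ (ψ_y φ_x − ψ_x φ_y)` for every smooth `φ`
compactly supported in the open set `Ω`. -/
theorem nonlinear_term_integration_by_parts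
    (Ω : Set (ℝ × ℝ)) (hΩ : IsOpen Ω)
    (ψ : ℝ × ℝ → ℝ) (hψ : ContDiff ℝ 3 ψ)
    (φ : ℝ × ℝ → ℝ) (hφ : ContDiff ℝ (⊤ : ℕ∞) φ)
    (hφc : HasCompactSupport φ) (hφΩ : tsupport φ ⊆ Ω) :
    ∫ p in Ω, (-pdy ψ p * lap (pdx ψ) p + pdx ψ p * lap (pdy ψ) p) * φ p =
      ∫ p in Ω, lap ψ p * (pdy ψ p * pdx φ p - pdx ψ p * pdy φ p) := by
  -- Regularity
  have hψ2 : ContDiff ℝ 2 ψ := hψ.of_le (by norm_num)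
  have hu : ContDiff ℝ 2 (pdx ψ) := contDiff_pdx (hψ.of_le (by norm_num))
  have hv : ContDiff ℝ 2 (pdy ψ) := contDiff_pdy (hψ.of_le (by norm_num))
  have huu : ContDiff ℝ 1 (pdx (pdx ψ)) := contDiff_pdx (hu.of_le (by norm_num))
  have huv : ContDiff ℝ 1 (pdy (pdx ψ)) := contDiff_pdy (hu.of_le (by norm_num))
  have hvu : ContDiff ℝ 1 (pdx (pdy ψ)) := contDiff_pdx (hv.of_le (by norm_num))
  have hvv : ContDiff ℝ 1 (pdy (pdy ψ)) := contDiff_pdy (hv.of_le (by norm_num))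
  have hL : ContDiff ℝ 1 (lap ψ) := huu.add hvv
  have hφ1 : ContDiff ℝ 1 φ := hφ.of_le (by simp)
  -- Clairaut consequences
  have comm : pdy (pdx ψ) = pdx (pdy ψ) := funext fun p => (pdx_pdy_comm hψ2 p).symm
  have lapu : ∀ p, lap (pdx ψ) p = pdx (lap ψ) p := by
    intro p
    have e : pdx (lap ψ) p = pdx (pdx (pdx ψ)) p + pdx (pdy (pdy ψ)) p :=
      pdx_add (huu.differentiable one_ne_zero p) (hvv.differentiable one_ne_zero p)
    have e2 : pdy (pdy (pdx ψ)) p = pdx (pdy (pdy ψ)) p := by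
      rw [comm]
      exact (pdx_pdy_comm hv p).symm
    show pdx (pdx (pdx ψ)) p + pdy (pdy (pdx ψ)) p = _
    rw [e, e2]
  have lapv : ∀ p, lap (pdy ψ) p = pdy (lap ψ) p := by
    intro p
    have e : pdy (lap ψ) p = pdy (pdx (pdx ψ)) p + pdy (pdy (pdy ψ)) p :=
      pdy_add (huu.differentiable one_ne_zero p) (hvv.differentiable one_ne_zero p)
    have e2 : pdx (pdx (pdy ψ)) p = pdy (pdx (pdx ψ)) p := by
      rw [← comm]
      exact pdx_pdy_comm hu p
    show pdx (pdx (pdy ψ)) p + pdy (pdy (pdy ψ)) p = _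
    rw [e, e2]
  -- The two auxiliary compactly supported functions
  set F : ℝ × ℝ → ℝ := fun p => lap ψ p * pdy ψ p * φ p with hFdef
  set G : ℝ × ℝ → ℝ := fun p => lap ψ p * pdx ψ p * φ p with hGdef
  have hv1 : ContDiff ℝ 1 (pdy ψ) := hv.of_le one_le_two
  have hu1 : ContDiff ℝ 1 (pdx ψ) := hu.of_le one_le_two
  have hF : ContDiff ℝ 1 F := (hL.mul hv1).mul hφ1
  have hG : ContDiff ℝ 1 G := (hL.mul hu1).mul hφ1
  have hFc : HasCompactSupport F :=
    hcs_aux hφc fun p hp => by simp [hFdef, image_eq_zero_of_notMem_tsupport hp]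
  have hGc : HasCompactSupport G :=
    hcs_aux hφc fun p hp => by simp [hGdef, image_eq_zero_of_notMem_tsupport hp]
  -- pointwise expansion of the derivatives of F and G
  have pdxF : ∀ p, pdx F p =
      (pdx (lap ψ) p * pdy ψ p + lap ψ p * pdx (pdy ψ) p) * φ p
        + lap ψ p * pdy ψ p * pdx φ p := by
    intro p
    have h1 : DifferentiableAt ℝ (fun q => lap ψ q * pdy ψ q) p :=
      ((hL.differentiable one_ne_zero p).mul (hv1.differentiable one_ne_zero p))
    have := pdx_mul (f := fun q => lap ψ q * pdy ψ q) (g := φ) h1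
      (hφ1.differentiable one_ne_zero p)
    rw [hFdef]
    rw [show (fun p => lap ψ p * pdy ψ p * φ p) = fun q => (fun q => lap ψ q * pdy ψ q) q * φ q
      from rfl, this,
      pdx_mul (hL.differentiable one_ne_zero p) (hv1.differentiable one_ne_zero p)]
  have pdyG : ∀ p, pdy G p =
      (pdy (lap ψ) p * pdx ψ p + lap ψ p * pdy (pdx ψ) p) * φ p
        + lap ψ p * pdx ψ p * pdy φ p := by
    intro p
    have h1 : DifferentiableAt ℝ (fun q => lap ψ q * pdx ψ q) p :=
      ((hL.differentiable one_ne_zero p).mul (hu1.differentiable one_ne_zero p))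
    have := pdy_mul (f := fun q => lap ψ q * pdx ψ q) (g := φ) h1
      (hφ1.differentiable one_ne_zero p)
    rw [hGdef]
    rw [show (fun p => lap ψ p * pdx ψ p * φ p) = fun q => (fun q => lap ψ q * pdx ψ q) q * φ q
      from rfl, this,
      pdy_mul (hL.differentiable one_ne_zero p) (hu1.differentiable one_ne_zero p)]
  -- the key pointwise identity
  have key : ∀ p, (-pdy ψ p * lap (pdx ψ) p + pdx ψ p * lap (pdy ψ) p) * φ p
      - lap ψ p * (pdy ψ p * pdx φ p - pdx ψ p * pdy φ p) = pdy G p - pdx F p := by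
    intro p
    rw [pdxF p, pdyG p, lapu p, lapv p, comm]
    ring
  -- integrability of the two integrands
  have contL : Continuous fun p => (-pdy ψ p * lap (pdx ψ) p + pdx ψ p * lap (pdy ψ) p) * φ p := by
    have c1 : Continuous (lap (pdx ψ)) :=
      ((contDiff_pdx (n:=0) (huu.of_le (by norm_num))).add (contDiff_pdy (n:=0) (huv.of_le (by norm_num)))).continuous
    have c2 : Continuous (lap (pdy ψ)) :=
      ((contDiff_pdx (n:=0) (hvu.of_le (by norm_num))).add (contDiff_pdy (n:=0) (hvv.of_le (by norm_num)))).continuous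
    exact (((hv1.continuous.neg.mul c1).add (hu1.continuous.mul c2)).mul hφ1.continuous)
  have contR : Continuous fun p => lap ψ p * (pdy ψ p * pdx φ p - pdx ψ p * pdy φ p) := by
    have c1 : Continuous (pdx φ) := cont_pd φ hφ1 _
    have c2 : Continuous (pdy φ) := cont_pd φ hφ1 _
    exact hL.continuous.mul ((hv1.continuous.mul c1).sub (hu1.continuous.mul c2))
  have hcsL : HasCompactSupport
      fun p => (-pdy ψ p * lap (pdx ψ) p + pdx ψ p * lap (pdy ψ) p) * φ p :=
    hcs_aux hφc fun p hp => by simp [image_eq_zero_of_notMem_tsupport hp]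
  have pdφ0 : ∀ p, p ∉ tsupport φ → pdx φ p = 0 ∧ pdy φ p = 0 := by
    intro p hp
    have : fderiv ℝ φ p = 0 := by
      by_contra h
      exact hp (support_fderiv_subset ℝ h)
    constructor <;> · show fderiv ℝ φ p _ = 0; rw [this]; rfl
  have hcsR : HasCompactSupport
      fun p => lap ψ p * (pdy ψ p * pdx φ p - pdx ψ p * pdy φ p) :=
    hcs_aux hφc fun p hp => by simp [(pdφ0 p hp).1, (pdφ0 p hp).2]
  have hIL : Integrable (fun p => (-pdy ψ p * lap (pdx ψ) p + pdx ψ p * lap (pdy ψ) p) * φ p)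
      volume := contL.integrable_of_hasCompactSupport hcsL
  have hIR : Integrable (fun p => lap ψ p * (pdy ψ p * pdx φ p - pdx ψ p * pdy φ p)) volume :=
    contR.integrable_of_hasCompactSupport hcsR
  -- reduce to vanishing of the integral of the difference
  rw [← sub_eq_zero, ← MeasureTheory.integral_sub hIL.integrableOn hIR.integrableOn]
  rw [MeasureTheory.setIntegral_eq_integral_of_forall_compl_eq_zero (fun p hp => by
    have hp' : p ∉ tsupport φ := fun h => hp (hφΩ h)
    simp [image_eq_zero_of_notMem_tsupport hp', (pdφ0 p hp').1, (pdφ0 p hp').2])]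
  have : (∫ p, ((-pdy ψ p * lap (pdx ψ) p + pdx ψ p * lap (pdy ψ) p) * φ p
      - lap ψ p * (pdy ψ p * pdx φ p - pdx ψ p * pdy φ p)))
      = ∫ p, (pdy G p - pdx F p) := by
    congr 1
    funext p
    exact key p
  have h1 : Integrable (fun p => pdy G p) volume :=
    (cont_pd G hG (0, 1)).integrable_of_hasCompactSupport (hcs_pd G hGc (0, 1))
  have h2 : Integrable (fun p => pdx F p) volume :=
    (cont_pd F hF (1, 0)).integrable_of_hasCompactSupport (hcs_pd F hFc (1, 0))
  rw [this, MeasureTheory.integral_sub h1 h2,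
    integral_pdy_eq_zero G hG hGc, integral_pdx_eq_zero F hF hFc, sub_zero]
end

section
/- Let p(x, y) be a real polynomial of degree at most 3 in x and at most 3 in y (a bicubic polynomial). Suppose that at each of the four vertices v ∈ {(0,0), (1,0), (0,1), (1,1)} of the unit square, the value p(v), the first partial derivatives ∂p/∂x(v) and ∂p/∂y(v), and the mixed second derivative ∂²p/∂x∂y(v) all vanish. Then p is the zero polynomial. (Equivalently, these 16 degrees of freedom determine a bicubic polynomial uniquely.) -/
/-- The bicubic polynomial with coefficients `c : Fin 4 → Fin 4 → ℝ`,
`P(x,y) = ∑_{i,j ≤ 3} c i j · xⁱ yʲ`. -/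
noncomputable def bicubic (c : Fin 4 → Fin 4 → ℝ) : ℝ → ℝ → ℝ :=
  fun x y => ∑ i : Fin 4, ∑ j : Fin 4, c i j * x ^ (i : ℕ) * y ^ (j : ℕ)

/-!
A bicubic is a cubic in `y` whose coefficients are cubics in `x`, and its `x`-derivative is
a cubic in `y` whose coefficients are the derivatives of those. On each vertical edge
`x = a ∈ {0, 1}` the data at the two endpoints are Hermite data (value and slope at `0` and
`1`) of these two cubics in `y`, and a cubic with vanishing Hermite data is zero. Hence every
coefficient cubic has vanishing Hermite data in `x`, so it is zero as well.
-/

noncomputable def cubic (d : Fin 4 → ℝ) (x : ℝ) : ℝ :=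
  ∑ i : Fin 4, d i * x ^ (i : ℕ)

lemma hasDerivAt_cubic (d : Fin 4 → ℝ) (x : ℝ) :
    HasDerivAt (cubic d) (∑ i : Fin 4, d i * ((i : ℕ) * x ^ ((i : ℕ) - 1))) x :=
  HasDerivAt.fun_sum fun i _ => (hasDerivAt_pow (i : ℕ) x).const_mul (d i)

lemma deriv_cubic (d : Fin 4 → ℝ) (x : ℝ) :
    deriv (cubic d) x = ∑ i : Fin 4, d i * ((i : ℕ) * x ^ ((i : ℕ) - 1)) :=
  (hasDerivAt_cubic d x).deriv

lemma eq_zero_of_cubic_hermite_data_eq_zero {d : Fin 4 → ℝ}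
    (hval : ∀ t ∈ ({0, 1} : Set ℝ), cubic d t = 0)
    (hder : ∀ t ∈ ({0, 1} : Set ℝ), deriv (cubic d) t = 0) : d = 0 := by
  have v0 := hval 0 (by simp)
  have v1 := hval 1 (by simp)
  have d0 := hder 0 (by simp)
  have d1 := hder 1 (by simp)
  simp only [deriv_cubic, cubic, Fin.sum_univ_four] at v0 v1 d0 d1
  norm_num at v0 v1 d0 d1
  funext i
  fin_cases i <;> simp only [Fin.zero_eta, Fin.mk_one, Fin.reduceFinMk, Pi.zero_apply] <;> linarith

section CoefficientFamily

variable {f : Fin 4 → ℝ → ℝ} {a : ℝ}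

lemma hasDerivAt_cubic_coeff (hf : ∀ j, DifferentiableAt ℝ (f j) a) (y : ℝ) :
    HasDerivAt (fun x => cubic (fun j => f j x) y) (cubic (fun j => deriv (f j) a) y) a :=
  HasDerivAt.fun_sum fun j _ => (hf j).hasDerivAt.mul_const _

lemma hasDerivAt_deriv_cubic_coeff (hf : ∀ j, DifferentiableAt ℝ (f j) a) (y : ℝ) :
    HasDerivAt (fun x => deriv (cubic (fun j => f j x)) y)
      (deriv (cubic (fun j => deriv (f j) a)) y) a := by
  simp only [deriv_cubic]
  exact HasDerivAt.fun_sum fun j _ => (hf j).hasDerivAt.mul_const _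

end CoefficientFamily

section Bicubic

variable (c : Fin 4 → Fin 4 → ℝ)

lemma bicubic_eq_cubic_cubic (x y : ℝ) :
    bicubic c x y = cubic (fun j => cubic (c · j) x) y := by
  simp only [bicubic, cubic, Finset.sum_mul]
  rw [Finset.sum_comm]

lemma differentiableAt_cubic_column (j : Fin 4) (a : ℝ) :
    DifferentiableAt ℝ (cubic (c · j)) a :=
  (hasDerivAt_cubic _ a).differentiableAt

lemma deriv_bicubic_left (a b : ℝ) :
    deriv (fun x => bicubic c x b) a = cubic (fun j => deriv (cubic (c · j)) a) b := by
  simp only [bicubic_eq_cubic_cubic]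
  exact (hasDerivAt_cubic_coeff (differentiableAt_cubic_column c · a) b).deriv

lemma deriv_bicubic_right (a b : ℝ) :
    deriv (fun y => bicubic c a y) b = deriv (cubic (fun j => cubic (c · j) a)) b := by
  simp only [bicubic_eq_cubic_cubic]

lemma deriv_deriv_bicubic (a b : ℝ) :
    deriv (fun x => deriv (fun y => bicubic c x y) b) a
      = deriv (cubic (fun j => deriv (cubic (c · j)) a)) b := by
  simp only [bicubic_eq_cubic_cubic]
  exact (hasDerivAt_deriv_cubic_coeff (differentiableAt_cubic_column c · a) b).deriv

end Bicubic

/-- Unisolvence of the Bogner–Fox–Schmit degrees of freedom: a bicubic polynomial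
whose value, first partial derivatives, and mixed second derivative vanish at the
four vertices of the unit square is the zero polynomial. -/
theorem bicubic_unisolvence (c : Fin 4 → Fin 4 → ℝ)
    (hval : ∀ a ∈ ({0, 1} : Set ℝ), ∀ b ∈ ({0, 1} : Set ℝ), bicubic c a b = 0)
    (hdx : ∀ a ∈ ({0, 1} : Set ℝ), ∀ b ∈ ({0, 1} : Set ℝ),
      deriv (fun x => bicubic c x b) a = 0)
    (hdy : ∀ a ∈ ({0, 1} : Set ℝ), ∀ b ∈ ({0, 1} : Set ℝ),
      deriv (fun y => bicubic c a y) b = 0)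
    (hdxy : ∀ a ∈ ({0, 1} : Set ℝ), ∀ b ∈ ({0, 1} : Set ℝ),
      deriv (fun x => deriv (fun y => bicubic c x y) b) a = 0) :
    ∀ i j, c i j = 0 := by
  have hedge : ∀ a ∈ ({0, 1} : Set ℝ),
      (fun j => cubic (c · j) a) = 0 ∧ (fun j => deriv (cubic (c · j)) a) = 0 := by
    intro a ha
    refine ⟨eq_zero_of_cubic_hermite_data_eq_zero (fun b hb => ?_) (fun b hb => ?_),
      eq_zero_of_cubic_hermite_data_eq_zero (fun b hb => ?_) (fun b hb => ?_)⟩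
    · rw [← bicubic_eq_cubic_cubic]; exact hval a ha b hb
    · rw [← deriv_bicubic_right]; exact hdy a ha b hb
    · rw [← deriv_bicubic_left]; exact hdx a ha b hb
    · rw [← deriv_deriv_bicubic]; exact hdxy a ha b hb
  intro i j
  have hcol : (c · j) = 0 := eq_zero_of_cubic_hermite_data_eq_zero
    (fun a ha => congrFun (hedge a ha).1 j) (fun a ha => congrFun (hedge a ha).2 j)
  exact congrFun hcol i
end
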